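/- arXiv:2301.11126 — 6 statements merged into one kernel-verified Lean document; each statement's English description precedes it below -/
import Mathlib

section
/- Let A be an n×n Metzler matrix whose Perron eigenvalue λ₁ (the eigenvalue with maximal real part) is a simple eigenvalue, with normalized nonnegative left eigenvector u. Then for every initial condition X(0) ∈ ℝⁿ outside a set of Lebesgue measure zero, the solution X(t) of dX/dt = XA satisfies that the proportion vector P(t) = X(t)/∑ᵢ Xᵢ(t) converges to u as t → ∞. -/
open Polynomial Filter Matrix NormedSpace MeasureTheory

set_option maxHeartbeats 1000000
section OdeAux
open Polynomial Filter Matrix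

lemma my_poly_exp_decay (j : ℕ) {a : ℝ} (ha : a < 0) :
    Tendsto (fun t : ℝ => t ^ j * Real.exp (a * t)) atTop (nhds 0) := by
  have h0 : Tendsto (fun t : ℝ => -a * t) atTop atTop :=
    Tendsto.const_mul_atTop (by linarith) tendsto_id
  have h := (Real.tendsto_pow_mul_exp_neg_atTop_nhds_zero j).comp h0
  have h2 := h.const_mul (((-a) ^ j)⁻¹)
  rw [mul_zero] at h2
  refine h2.congr (fun t => ?_)
  have hne : (-a) ^ j ≠ 0 := pow_ne_zero _ (by linarith)
  simp only [Function.comp_apply]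
  rw [show -(-a * t) = a * t by ring, show (-a * t) ^ j = (-a) ^ j * t ^ j by rw [mul_pow]]
  field_simp

lemma my_charmatrix_sub_smul_one {m : ℕ} (M : Matrix (Fin m) (Fin m) ℂ) (μ : ℂ) :
    (M - μ • 1).charpoly = M.charpoly.comp (X + C μ) := by
  have hcomp : ∀ p : ℂ[X], p.comp (X + C μ) = aeval (X + C μ) p := by
    intro p
    rw [Polynomial.aeval_def, Polynomial.algebraMap_eq]
    rfl
  rw [Matrix.charpoly, Matrix.charpoly, hcomp, ← AlgHom.coe_toRingHom, RingHom.map_det]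
  congr 1
  ext i k
  by_cases h : i = k
  · subst h
    simp [Matrix.charmatrix_apply_eq, Matrix.sub_apply, Matrix.smul_apply, Matrix.one_apply_eq,
      map_sub, Polynomial.aeval_X, Polynomial.aeval_C]
    ring
  · simp [Matrix.charmatrix_apply_ne _ _ _ h, Matrix.sub_apply, Matrix.smul_apply,
      Matrix.one_apply_ne h, Polynomial.aeval_C]

lemma my_charpoly_transpose {m : ℕ} (M : Matrix (Fin m) (Fin m) ℂ) :
    (Mᵀ).charpoly = M.charpoly := by
  rw [Matrix.charpoly, Matrix.charpoly, ← Matrix.det_transpose]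
  congr 1
  ext i k
  by_cases h : i = k
  · subst h; simp [Matrix.charmatrix_apply_eq]
  · simp [Matrix.charmatrix_apply_ne _ _ _ h, Matrix.charmatrix_apply_ne _ _ _ (Ne.symm h),
      Matrix.transpose_apply]

lemma my_spectrum_transpose {m : ℕ} (M : Matrix (Fin m) (Fin m) ℂ) :
    spectrum ℂ Mᵀ = spectrum ℂ M := by
  ext μ
  simp only [spectrum.mem_iff, not_iff_not]
  have : algebraMap ℂ (Matrix (Fin m) (Fin m) ℂ) μ - Mᵀ = (algebraMap ℂ _ μ - M)ᵀ := by
    rw [Matrix.transpose_sub]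
    congr 1
    rw [Algebra.algebraMap_eq_smul_one, Matrix.transpose_smul, Matrix.transpose_one]
  rw [this, Matrix.isUnit_iff_isUnit_det, Matrix.det_transpose, ← Matrix.isUnit_iff_isUnit_det]


lemma my_exp_mulVec {m : ℕ} (M : Matrix (Fin m) (Fin m) ℂ) (v : Fin m → ℂ) :
    NormedSpace.exp M *ᵥ v = ∑' j : ℕ, ((j.factorial : ℂ)⁻¹) • (M ^ j *ᵥ v) := by
  letI : SeminormedRing (Matrix (Fin m) (Fin m) ℂ) := Matrix.linftyOpSemiNormedRing
  letI : NormedRing (Matrix (Fin m) (Fin m) ℂ) := Matrix.linftyOpNormedRing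
  letI : NormedAlgebra ℂ (Matrix (Fin m) (Fin m) ℂ) := Matrix.linftyOpNormedAlgebra
  let L0 : Matrix (Fin m) (Fin m) ℂ →ₗ[ℂ] (Fin m → ℂ) :=
    { toFun := fun N => N *ᵥ v
      map_add' := fun a b => Matrix.add_mulVec a b v
      map_smul' := fun c a => Matrix.smul_mulVec c a v }
  let L : Matrix (Fin m) (Fin m) ℂ →L[ℂ] (Fin m → ℂ) := LinearMap.toContinuousLinearMap L0
  have hs : Summable fun j : ℕ => ((j.factorial : ℂ)⁻¹) • M ^ j :=
    NormedSpace.expSeries_summable' (𝕂 := ℂ) M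
  have h := L.map_tsum hs
  have hexp : NormedSpace.exp M = ∑' j : ℕ, ((j.factorial : ℂ)⁻¹) • M ^ j := by
    rw [NormedSpace.exp_eq_tsum ℂ]
  rw [show NormedSpace.exp M *ᵥ v = L (NormedSpace.exp M) from rfl, hexp, h]
  refine tsum_congr fun j => ?_
  simp [L, L0, Matrix.smul_mulVec]

lemma my_exp_mulVec_eigen {m : ℕ} (M : Matrix (Fin m) (Fin m) ℂ) {μ : ℂ} {v : Fin m → ℂ}
    (hv : M *ᵥ v = μ • v) : NormedSpace.exp M *ᵥ v = Complex.exp μ • v := by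
  have hpow : ∀ j : ℕ, M ^ j *ᵥ v = μ ^ j • v := by
    intro j
    induction j with
    | zero => simp
    | succ j ih =>
      rw [pow_succ, pow_succ, ← Matrix.mulVec_mulVec, hv, Matrix.mulVec_smul, ih,
        smul_smul, mul_comm]
  rw [my_exp_mulVec]
  simp_rw [hpow, smul_smul]
  rw [Summable.tsum_smul_const ?_]
  · congr 1
    rw [Complex.exp_eq_exp_ℂ, NormedSpace.exp_eq_tsum ℂ]
    exact tsum_congr fun j => by rw [smul_eq_mul]
  · simpa [smul_eq_mul] using NormedSpace.expSeries_summable' (𝕂 := ℂ) μ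

lemma my_exp_mulVec_trunc {m : ℕ} (N : Matrix (Fin m) (Fin m) ℂ) {w : Fin m → ℂ} {k : ℕ}
    (hw : N ^ k *ᵥ w = 0) (c : ℂ) :
    NormedSpace.exp (c • N) *ᵥ w =
      ∑ j ∈ Finset.range k, ((j.factorial : ℂ)⁻¹ * c ^ j) • (N ^ j *ᵥ w) := by
  rw [my_exp_mulVec]
  rw [tsum_eq_sum (s := Finset.range k)]
  · refine Finset.sum_congr rfl fun j _ => ?_
    rw [_root_.smul_pow, Matrix.smul_mulVec, smul_smul]
  · intro j hj
    rw [Finset.mem_range, not_lt] at hj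
    have : N ^ j *ᵥ w = 0 := by
      rw [show j = (j - k) + k by omega, pow_add, ← Matrix.mulVec_mulVec, hw,
        Matrix.mulVec_zero]
    rw [_root_.smul_pow, Matrix.smul_mulVec, this, smul_zero, smul_zero]

lemma my_decay {m : ℕ} (B : Matrix (Fin m) (Fin m) ℂ) (lam : ℝ) {μ : ℂ} (hμ : μ.re < lam)
    {w : Fin m → ℂ} {k : ℕ} (hw : ((B - μ • 1) ^ k) *ᵥ w = 0) :
    Tendsto (fun t : ℝ => Complex.exp (-(lam * t)) • (NormedSpace.exp (t • B) *ᵥ w))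
      atTop (nhds 0) := by
  letI : SeminormedRing (Matrix (Fin m) (Fin m) ℂ) := Matrix.linftyOpSemiNormedRing
  letI : NormedRing (Matrix (Fin m) (Fin m) ℂ) := Matrix.linftyOpNormedRing
  letI : NormedAlgebra ℂ (Matrix (Fin m) (Fin m) ℂ) := Matrix.linftyOpNormedAlgebra
  set N : Matrix (Fin m) (Fin m) ℂ := B - μ • 1 with hN
  have key : ∀ t : ℝ, NormedSpace.exp (t • B) *ᵥ w
      = Complex.exp (t * μ) • (NormedSpace.exp ((t : ℂ) • N) *ᵥ w) := by
    intro t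
    have h1 : (t : ℝ) • B = ((t : ℂ) * μ) • (1 : Matrix (Fin m) (Fin m) ℂ) + (t : ℂ) • N := by
      rw [hN, smul_sub, ← smul_smul]
      have : (t : ℝ) • B = (t : ℂ) • B := by
        rw [← algebraMap_smul ℂ (t : ℝ) B, Complex.coe_algebraMap]
      rw [this]
      abel
    have hcomm : Commute (((t : ℂ) * μ) • (1 : Matrix (Fin m) (Fin m) ℂ)) ((t : ℂ) • N) :=
      ((Commute.one_left N).smul_left _).smul_right _
    rw [h1, Matrix.exp_add_of_commute _ _ hcomm]
    have h2 : NormedSpace.exp (((t : ℂ) * μ) • (1 : Matrix (Fin m) (Fin m) ℂ))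
        = Complex.exp (t * μ) • (1 : Matrix (Fin m) (Fin m) ℂ) := by
      rw [← Algebra.algebraMap_eq_smul_one]
      erw [← NormedSpace.algebraMap_exp_comm (𝕂 := ℂ) (𝔸 := Matrix (Fin m) (Fin m) ℂ)]
      rw [Algebra.algebraMap_eq_smul_one, Complex.exp_eq_exp_ℂ]
    rw [h2, smul_mul_assoc, one_mul, Matrix.smul_mulVec]
  simp only [key]
  have expand : ∀ t : ℝ, Complex.exp (-(lam * t)) •
        (Complex.exp (t * μ) • (NormedSpace.exp ((t : ℂ) • N) *ᵥ w))
      = ∑ j ∈ Finset.range k,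
          (Complex.exp (-(lam * t)) * Complex.exp (t * μ) * ((j.factorial : ℂ)⁻¹ * (t:ℂ) ^ j)) •
            (N ^ j *ᵥ w) := by
    intro t
    rw [my_exp_mulVec_trunc N hw, Finset.smul_sum, Finset.smul_sum]
    exact Finset.sum_congr rfl fun j _ => by rw [smul_smul, smul_smul, mul_assoc]
  simp only [expand]
  have h0 : (0 : Fin m → ℂ) = ∑ j ∈ Finset.range k, (0 : Fin m → ℂ) := by simp
  rw [h0]
  refine tendsto_finset_sum _ fun j _ => ?_
  have hscal : Tendsto (fun t : ℝ =>
      Complex.exp (-(lam * t)) * Complex.exp (t * μ) * ((j.factorial : ℂ)⁻¹ * (t:ℂ) ^ j))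
      atTop (nhds 0) := by
    have hb : Tendsto (fun t : ℝ => (j.factorial : ℝ)⁻¹ * (t ^ j * Real.exp ((μ.re - lam) * t)))
        atTop (nhds 0) := by
      simpa using (my_poly_exp_decay j (a := μ.re - lam) (by linarith)).const_mul
        ((j.factorial : ℝ)⁻¹)
    apply squeeze_zero_norm' (a := fun t => (j.factorial : ℝ)⁻¹ * (t ^ j * Real.exp ((μ.re - lam) * t))) ?_ hb
    filter_upwards [eventually_ge_atTop (0 : ℝ)] with t ht
    have hnorm : ‖Complex.exp (-(lam * t)) * Complex.exp (t * μ) *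
        ((j.factorial : ℂ)⁻¹ * (t:ℂ) ^ j)‖
        = Real.exp (-(lam*t)) * Real.exp (t * μ.re) * ((j.factorial : ℝ)⁻¹ * t ^ j) := by
      simp only [norm_mul, norm_inv, norm_pow, Complex.norm_exp,
        Complex.norm_natCast, Complex.norm_real, Real.norm_eq_abs, abs_of_nonneg ht]
      norm_num [Complex.mul_re]
    rw [hnorm]
    rw [show Real.exp (-(lam*t)) * Real.exp (t * μ.re) = Real.exp ((μ.re - lam) * t) by
      rw [← Real.exp_add]; congr 1; ring]
    rw [show Real.exp ((μ.re - lam) * t) * ((j.factorial : ℝ)⁻¹ * t ^ j)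
      = (j.factorial : ℝ)⁻¹ * (t ^ j * Real.exp ((μ.re - lam) * t)) by ring]
  simpa using hscal.smul_const (N ^ j *ᵥ w)

lemma my_solution_formula {m : ℕ} (M : Matrix (Fin m) (Fin m) ℂ) (Z : ℝ → Fin m → ℂ)
    (hZ : ∀ t i, HasDerivAt (fun s => Z s i) ((Z t ᵥ* M) i) t) (t : ℝ) :
    Z t = Z 0 ᵥ* NormedSpace.exp (t • M) := by
  letI : SeminormedRing (Matrix (Fin m) (Fin m) ℂ) := Matrix.linftyOpSemiNormedRing
  letI : NormedRing (Matrix (Fin m) (Fin m) ℂ) := Matrix.linftyOpNormedRing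
  letI : NormedAlgebra ℝ (Matrix (Fin m) (Fin m) ℂ) := Matrix.linftyOpNormedAlgebra
  set E : ℝ → Matrix (Fin m) (Fin m) ℂ := fun s => NormedSpace.exp (s • (-M)) with hEdef
  have hE : ∀ s : ℝ, HasDerivAt E ((-M) * E s) s := fun s => hasDerivAt_exp_smul_const' (-M) s
  have hEentry : ∀ (s : ℝ) (j i : Fin m), HasDerivAt (fun r => E r j i) (((-M) * E s) j i) s := by
    intro s j i
    let L0 : Matrix (Fin m) (Fin m) ℂ →ₗ[ℝ] ℂ :=
      { toFun := fun N => N j i, map_add' := fun a b => rfl, map_smul' := fun c a => rfl }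
    have := (LinearMap.toContinuousLinearMap L0).hasFDerivAt.comp_hasDerivAt s (hE s)
    exact this
  have hg : ∀ i : Fin m, ∀ s : ℝ, HasDerivAt (fun r => (Z r ᵥ* E r) i) 0 s := by
    intro i s
    have hsum : HasDerivAt (fun r => ∑ j, Z r j * E r j i)
        (∑ j, ((Z s ᵥ* M) j * E s j i + Z s j * ((-M) * E s) j i)) s :=
      HasDerivAt.fun_sum fun j _ => (hZ s j).mul (hEentry s j i)
    have heq : (fun r => ∑ j, Z r j * E r j i) = fun r => (Z r ᵥ* E r) i := by
      funext r
      simp [Matrix.vecMul, dotProduct]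
    have hval : (∑ j, ((Z s ᵥ* M) j * E s j i + Z s j * ((-M) * E s) j i)) = 0 := by
      rw [Finset.sum_add_distrib]
      have h1 : ∑ j, (Z s ᵥ* M) j * E s j i = ((Z s ᵥ* M) ᵥ* E s) i := by
        simp [Matrix.vecMul, dotProduct]
      have h2 : ∑ j, Z s j * ((-M) * E s) j i = (Z s ᵥ* ((-M) * E s)) i := by
        simp [Matrix.vecMul, dotProduct]
      rw [h1, h2, Matrix.vecMul_vecMul, neg_mul, Matrix.vecMul_neg]
      simp
    rw [← heq]
    rw [← hval]
    exact hsum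
  have hconst : ∀ i : Fin m, (Z t ᵥ* E t) i = (Z 0 ᵥ* E 0) i := by
    intro i
    exact is_const_of_deriv_eq_zero (fun s => (hg i s).differentiableAt)
      (fun s => (hg i s).deriv) t 0
  have hE0 : E 0 = 1 := by rw [hEdef]; simp [NormedSpace.exp_zero]
  have hZE : Z t ᵥ* E t = Z 0 := by
    funext i
    rw [hconst i, hE0, Matrix.vecMul_one]
  have hinv : E t * NormedSpace.exp (t • M) = 1 := by
    rw [hEdef]
    have hc : Commute (t • (-M)) (t • M) := by
      have : t • (-M) = -(t • M) := by rw [smul_neg]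
      rw [this]
      exact (Commute.refl (t • M)).neg_left
    rw [← Matrix.exp_add_of_commute _ _ hc]
    simp [NormedSpace.exp_zero]
  calc Z t = Z t ᵥ* (1 : Matrix (Fin m) (Fin m) ℂ) := by rw [Matrix.vecMul_one]
    _ = Z t ᵥ* (E t * NormedSpace.exp (t • M)) := by rw [hinv]
    _ = (Z t ᵥ* E t) ᵥ* NormedSpace.exp (t • M) := by rw [Matrix.vecMul_vecMul]
    _ = Z 0 ᵥ* NormedSpace.exp (t • M) := by rw [hZE]

end OdeAux

/-- Linear ODE model: if the Perron eigenvalue λ₁ of a Metzler matrix A is simple,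
with normalized nonnegative left eigenvector u, then for all initial conditions
outside a Lebesgue-null set, the proportion vector P(t) = X(t)/∑ᵢXᵢ(t) of the
solution of dX/dt = XA converges to u. -/
theorem ode_phenotypic_equilibrium
    (n : ℕ) (hn : 0 < n) (A : Matrix (Fin n) (Fin n) ℝ)
    (hA : ∀ i j, i ≠ j → 0 ≤ A i j)
    (lam : ℝ)
    (hspec : (lam : ℂ) ∈ spectrum ℂ (A.map (Complex.ofReal · )))
    (hmax : ∀ μ : ℂ, μ ∈ spectrum ℂ (A.map (Complex.ofReal · )) → μ ≠ (lam : ℂ) → μ.re < lam)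
    (hsimple : ((A.map (Complex.ofReal · )).charpoly).rootMultiplicity (lam : ℂ) = 1)
    (u : Fin n → ℝ) (hu : ∀ i, 0 ≤ u i) (husum : ∑ i, u i = 1)
    (huev : Matrix.vecMul u A = lam • u) :
    ∃ E : Set (Fin n → ℝ), MeasureTheory.volume E = 0 ∧
      ∀ X : ℝ → Fin n → ℝ,
        (∀ t i, HasDerivAt (fun s => X s i) (Matrix.vecMul (X t) A i) t) →
        X 0 ∉ E →
        Filter.Tendsto (fun t => (∑ i, X t i)⁻¹ • X t) Filter.atTop (nhds u) := by

  classical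
  set Ac : Matrix (Fin n) (Fin n) ℂ := A.map (Complex.ofReal ·) with hAcdef
  set B : Matrix (Fin n) (Fin n) ℂ := Acᵀ with hBdef
  set φ : Module.End ℂ (Fin n → ℂ) := Matrix.toLinAlgEquiv' B with hphidef
  set uc : Fin n → ℂ := fun i => (u i : ℂ) with hucdef
  -- basic facts about u
  obtain ⟨i0, hi0⟩ : ∃ i, u i ≠ 0 := by
    by_contra h
    push_neg at h
    rw [Finset.sum_congr rfl (fun i _ => h i)] at husum
    simp at husum
  have hi0c : (u i0 : ℂ) ≠ 0 := by exact_mod_cast hi0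
  have hucne : uc ≠ 0 := by
    intro h
    exact hi0c (by rw [hucdef] at h; exact congrFun h i0)
  -- complexified vecMul
  have hvecMul_map : ∀ (x : Fin n → ℝ) (i : Fin n),
      ((x ᵥ* A) i : ℂ) = ((fun j => (x j : ℂ)) ᵥ* Ac) i := by
    intro x i
    simp only [Matrix.vecMul, dotProduct, hAcdef, Matrix.map_apply]
    push_cast
    rfl
  -- eigenvector equation for uc
  have hBu : B *ᵥ uc = (lam : ℂ) • uc := by
    rw [hBdef, Matrix.mulVec_transpose]
    funext i
    rw [hucdef]
    rw [← hvecMul_map u i]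
    rw [huev]
    simp [Pi.smul_apply, smul_eq_mul]
  -- End-matrix dictionary
  have hEndsub : ∀ ν : ℂ, φ - ν • 1 = Matrix.toLinAlgEquiv' (B - ν • 1) := by
    intro ν
    have h : (Matrix.toLinAlgEquiv' (ν • (1 : Matrix (Fin n) (Fin n) ℂ)) :
        Module.End ℂ (Fin n → ℂ)) = ν • 1 := by
      have h2 := AlgEquiv.commutes (Matrix.toLinAlgEquiv' (R := ℂ) (n := Fin n)) ν
      rw [Algebra.algebraMap_eq_smul_one, Algebra.algebraMap_eq_smul_one] at h2
      exact h2
    rw [hphidef, map_sub, h]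
  have hEndpow : ∀ (ν : ℂ) (k : ℕ) (x : Fin n → ℂ),
      ((φ - ν • 1) ^ k) x = ((B - ν • 1) ^ k) *ᵥ x := by
    intro ν k x
    rw [hEndsub, ← map_pow, Matrix.toLinAlgEquiv'_apply]
  -- uc is in the generalized eigenspace of lam
  have hmem : uc ∈ φ.maxGenEigenspace (lam : ℂ) := by
    rw [Module.End.mem_maxGenEigenspace]
    refine ⟨1, ?_⟩
    rw [pow_one, LinearMap.sub_apply, LinearMap.smul_apply, Module.End.one_apply, hphidef,
      Matrix.toLinAlgEquiv'_apply, hBu, sub_self]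
  -- charpoly of toLinAlgEquiv'
  have hcharN : ∀ N : Matrix (Fin n) (Fin n) ℂ,
      (Matrix.toLinAlgEquiv' N : Module.End ℂ (Fin n → ℂ)).charpoly = N.charpoly := by
    intro N
    rw [← LinearMap.charpoly_toMatrix (Matrix.toLinAlgEquiv' N : Module.End ℂ (Fin n → ℂ))
      (Pi.basisFun ℂ (Fin n)), LinearMap.toMatrix_eq_toMatrix']
    congr 1
    exact LinearMap.toMatrixAlgEquiv'_toLinAlgEquiv' N
  -- dimension of the generalized eigenspace of lam is 1
  have hrank : Module.finrank ℂ (φ.maxGenEigenspace (lam : ℂ)) = 1 := by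
    have e1 : φ.maxGenEigenspace (lam : ℂ) = (φ - (lam : ℂ) • 1).maxGenEigenspace 0 := by
      ext x
      rw [Module.End.mem_maxGenEigenspace, Module.End.mem_maxGenEigenspace]
      simp
    rw [e1, LinearMap.finrank_maxGenEigenspace_zero_eq, hEndsub, hcharN, my_charmatrix_sub_smul_one,
      ← Polynomial.rootMultiplicity_eq_natTrailingDegree, hBdef, my_charpoly_transpose]
    exact hsimple
  -- span of uc equals the generalized eigenspace
  have hspan : Submodule.span ℂ {uc} = φ.maxGenEigenspace (lam : ℂ) := by
    apply Submodule.eq_of_le_of_finrank_eq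
    · rw [Submodule.span_le, Set.singleton_subset_iff]
      exact hmem
    · rw [finrank_span_singleton hucne, hrank]
  -- complement
  set W : Submodule ℂ (Fin n → ℂ) :=
    ⨆ (μ : ℂ) (_ : μ ≠ (lam : ℂ)), φ.maxGenEigenspace μ with hWdef
  have hdisj : Disjoint (φ.maxGenEigenspace (lam : ℂ)) W :=
    (Module.End.independent_maxGenEigenspace φ) (lam : ℂ)
  have hsup : φ.maxGenEigenspace (lam : ℂ) ⊔ W = ⊤ := by
    apply le_antisymm le_top
    calc (⊤ : Submodule ℂ (Fin n → ℂ)) = ⨆ μ : ℂ, φ.maxGenEigenspace μ :=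
          (Module.End.iSup_maxGenEigenspace_eq_top φ).symm
      _ ≤ φ.maxGenEigenspace (lam : ℂ) ⊔ W := by
          refine iSup_le fun μ => ?_
          by_cases hμ : μ = (lam : ℂ)
          · rw [hμ]; exact le_sup_left
          · exact le_sup_of_le_right (le_iSup_of_le μ (le_iSup_of_le hμ le_rfl))
  have hcompl : IsCompl (φ.maxGenEigenspace (lam : ℂ)) W := ⟨hdisj, codisjoint_iff.mpr hsup⟩
  set pr := Submodule.linearProjOfIsCompl _ _ hcompl with hprdef
  have hprleft : ∀ x ∈ φ.maxGenEigenspace (lam : ℂ), ((pr x : Fin n → ℂ)) = x := by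
    intro x hx
    have := Submodule.linearProjOfIsCompl_apply_left hcompl ⟨x, hx⟩
    rw [hprdef]
    exact congrArg _ this
  have hsubmem : ∀ x : Fin n → ℂ, x - (pr x : Fin n → ℂ) ∈ W := by
    intro x
    rw [← Submodule.linearProjOfIsCompl_apply_eq_zero_iff hcompl]
    have h1 : pr (x - (pr x : Fin n → ℂ)) = pr x - pr ((pr x : Fin n → ℂ)) := map_sub _ _ _
    have h2 : pr ((pr x : Fin n → ℂ)) = pr x :=
      Submodule.linearProjOfIsCompl_apply_left hcompl (pr x)
    rw [hprdef] at h1 h2 ⊢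
    exact h1.trans (by rw [h2, sub_self])
  -- the coefficient functional
  set c : (Fin n → ℂ) → ℂ := fun x => (pr x : Fin n → ℂ) i0 * (u i0 : ℂ)⁻¹ with hcdef
  have hc : ∀ x, ((pr x : Fin n → ℂ)) = c x • uc := by
    intro x
    have hx : (pr x : Fin n → ℂ) ∈ Submodule.span ℂ {uc} := by
      rw [hspan]; exact (pr x).2
    obtain ⟨a, ha⟩ := Submodule.mem_span_singleton.mp hx
    have hval : c x = a := by
      show (pr x : Fin n → ℂ) i0 * (u i0 : ℂ)⁻¹ = a
      rw [← ha, Pi.smul_apply, smul_eq_mul]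
      have : uc i0 = (u i0 : ℂ) := rfl
      rw [this, mul_assoc, mul_inv_cancel₀ hi0c, mul_one]
    rw [hval]
    exact ha.symm
  have hcu : c uc = 1 := by
    show (pr uc : Fin n → ℂ) i0 * (u i0 : ℂ)⁻¹ = 1
    rw [hprleft uc hmem]
    exact mul_inv_cancel₀ hi0c
  -- the null set
  set mapC : (Fin n → ℝ) →ₗ[ℝ] (Fin n → ℂ) :=
    { toFun := fun x i => (x i : ℂ)
      map_add' := by
        intro a b; funext i
        simp [Pi.add_apply, Complex.ofReal_add]
      map_smul' := by
        intro r a; funext i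
        simp [Pi.smul_apply, smul_eq_mul, Complex.real_smul, Complex.ofReal_mul] } with hmapCdef
  set ℓ : (Fin n → ℝ) →ₗ[ℝ] ℝ :=
    (Complex.reLm.comp (((LinearMap.proj i0 : (Fin n → ℂ) →ₗ[ℝ] ℂ)).comp
      (((((φ.maxGenEigenspace (lam : ℂ)).subtype).comp pr).restrictScalars ℝ).comp mapC))) with hldef
  have hℓ : ∀ x : Fin n → ℝ, ℓ x * (u i0)⁻¹ = (c (fun i => (x i : ℂ))).re := by
    intro x
    rw [hldef, hcdef]
    simp only [LinearMap.coe_comp, Function.comp_apply, LinearMap.coe_restrictScalars,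
      Submodule.coe_subtype, LinearMap.proj_apply, Complex.reLm_coe, hmapCdef,
      LinearMap.coe_mk, AddHom.coe_mk]
    rw [← Complex.ofReal_inv, Complex.mul_re]
    simp
  refine ⟨(LinearMap.ker ℓ : Submodule ℝ (Fin n → ℝ)), ?_, ?_⟩
  · apply Measure.addHaar_submodule
    intro htop
    have humem : u ∈ LinearMap.ker ℓ := by rw [htop]; trivial
    rw [LinearMap.mem_ker] at humem
    have h1 := hℓ u
    rw [humem, zero_mul] at h1
    have h2 : c (fun i => ((u i : ℝ) : ℂ)) = c uc := by rw [hucdef]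
    rw [h2, hcu] at h1
    simp at h1
  · intro X hX hx0
    -- complexified solution
    set Z : ℝ → Fin n → ℂ := fun t i => (X t i : ℂ) with hZdef
    have hZd : ∀ t i, HasDerivAt (fun s => Z s i) ((Z t ᵥ* Ac) i) t := by
      intro t i
      have h1 := (hX t i)
      have h2 := (Complex.ofRealCLM.hasFDerivAt.comp_hasDerivAt t h1)
      have h3 : (Z t ᵥ* Ac) i = ((X t ᵥ* A) i : ℂ) := (hvecMul_map (X t) i).symm
      rw [hZdef]
      rw [h3]
      exact h2
    have hsol : ∀ t : ℝ, Z t = NormedSpace.exp (t • B) *ᵥ Z 0 := by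
      intro t
      letI : SeminormedRing (Matrix (Fin n) (Fin n) ℂ) := Matrix.linftyOpSemiNormedRing
      letI : NormedRing (Matrix (Fin n) (Fin n) ℂ) := Matrix.linftyOpNormedRing
      letI : NormedAlgebra ℝ (Matrix (Fin n) (Fin n) ℂ) := Matrix.linftyOpNormedAlgebra
      letI : NormedAlgebra ℂ (Matrix (Fin n) (Fin n) ℂ) := Matrix.linftyOpNormedAlgebra
      rw [my_solution_formula Ac Z hZd t,
        show NormedSpace.exp (t • Ac) = NormedSpace.exp (t • Ac) from
          rfl,
        ← Matrix.mulVec_transpose, ← Matrix.exp_transpose, Matrix.transpose_smul]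
    -- decay on W
    have hW : ∀ w ∈ W, Tendsto
        (fun t : ℝ => Complex.exp (-(lam * t)) • (NormedSpace.exp (t • B) *ᵥ w))
        atTop (nhds 0) := by
      intro w hw
      refine Submodule.iSup_induction _ (motive := fun x => Tendsto
        (fun t : ℝ => Complex.exp (-(lam * t)) • (NormedSpace.exp (t • B) *ᵥ x))
        atTop (nhds 0)) hw ?_ ?_ ?_
      · intro μ x hx
        by_cases hμ : μ = (lam : ℂ)
        · have hxbot : x ∈ (⊥ : Submodule ℂ (Fin n → ℂ)) := by
            rw [hμ] at hx
            simpa using hx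
          rw [Submodule.mem_bot] at hxbot
          subst hxbot
          simpa [Matrix.mulVec_zero] using (tendsto_const_nhds :
            Tendsto (fun _ : ℝ => (0 : Fin n → ℂ)) atTop (nhds 0))
        · have hxS : x ∈ φ.maxGenEigenspace μ := by rwa [iSup_pos hμ] at hx
          obtain ⟨k, hk⟩ := (Module.End.mem_maxGenEigenspace φ μ x).mp hxS
          rw [hEndpow] at hk
          by_cases hx0' : x = 0
          · subst hx0'
            simpa [Matrix.mulVec_zero] using (tendsto_const_nhds :
              Tendsto (fun _ : ℝ => (0 : Fin n → ℂ)) atTop (nhds 0))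
          · have hμlt : μ.re < lam := by
              refine hmax μ ?_ hμ
              have : μ ∈ spectrum ℂ B := by
                rw [spectrum.mem_iff]
                intro hunit
                have h2 : IsUnit (B - μ • 1) := by
                  have heq : B - μ • 1 = -((algebraMap ℂ (Matrix (Fin n) (Fin n) ℂ)) μ - B) := by
                    rw [Algebra.algebraMap_eq_smul_one, neg_sub]
                  rw [heq]
                  exact hunit.neg
                rcases (h2.pow k) with ⟨v, hv⟩
                apply hx0'
                calc x = (1 : Matrix (Fin n) (Fin n) ℂ) *ᵥ x := (Matrix.one_mulVec x).symm
                  _ = ((↑v⁻¹ * ↑v : Matrix (Fin n) (Fin n) ℂ)) *ᵥ x := by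
                      rw [Units.inv_mul]
                  _ = (↑v⁻¹ : Matrix (Fin n) (Fin n) ℂ) *ᵥ ((↑v : Matrix (Fin n) (Fin n) ℂ) *ᵥ x) := by
                      rw [Matrix.mulVec_mulVec]
                  _ = (↑v⁻¹ : Matrix (Fin n) (Fin n) ℂ) *ᵥ (((B - μ • 1) ^ k) *ᵥ x) := by rw [hv]
                  _ = 0 := by rw [hk, Matrix.mulVec_zero]
              rw [hBdef, my_spectrum_transpose] at this
              exact this
            exact my_decay B lam hμlt hk
      · simpa [Matrix.mulVec_zero] using (tendsto_const_nhds :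
          Tendsto (fun _ : ℝ => (0 : Fin n → ℂ)) atTop (nhds 0))
      · intro x y hx hy
        have h := hx.add hy
        rw [add_zero] at h
        refine h.congr fun t => ?_
        rw [Matrix.mulVec_add, smul_add]
    -- the real-smul helper
    have hRsmul : ∀ (t : ℝ) (P : Matrix (Fin n) (Fin n) ℂ), (t : ℝ) • P = ((t : ℂ)) • P := by
      intro t P
      rw [← algebraMap_smul ℂ (t : ℝ) P, Complex.coe_algebraMap]
    set x0c : Fin n → ℂ := Z 0 with hx0cdef
    set c0 : ℂ := c x0c with hc0def
    have hx0dec : x0c = c0 • uc + (x0c - (pr x0c : Fin n → ℂ)) := by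
      rw [hc0def, ← hc x0c]
      abel
    have hconst : ∀ t : ℝ,
        Complex.exp (-(lam * t)) • (NormedSpace.exp (t • B) *ᵥ (c0 • uc)) = c0 • uc := by
      intro t
      rw [Matrix.mulVec_smul]
      have hexp_t : NormedSpace.exp (t • B) *ᵥ uc = Complex.exp ((t : ℂ) * lam) • uc := by
        apply my_exp_mulVec_eigen
        rw [hRsmul t B, Matrix.smul_mulVec, hBu, smul_smul]
      rw [hexp_t, smul_smul, smul_smul,
        show Complex.exp (-(lam * t)) * c0 * Complex.exp ((t : ℂ) * lam) = c0 by
          rw [mul_comm _ c0, mul_assoc, ← Complex.exp_add,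
            show -((lam : ℂ) * t) + (t : ℂ) * lam = 0 by ring, Complex.exp_zero, mul_one]]
    have hsplit : ∀ t : ℝ, Complex.exp (-(lam * t)) • (NormedSpace.exp (t • B) *ᵥ x0c)
        = c0 • uc + Complex.exp (-(lam * t)) •
            (NormedSpace.exp (t • B) *ᵥ (x0c - (pr x0c : Fin n → ℂ))) := by
      intro t
      conv_lhs => rw [hx0dec]
      rw [Matrix.mulVec_add, smul_add, hconst t]
    have hmain : Tendsto (fun t : ℝ => Complex.exp (-(lam * t)) •
        (NormedSpace.exp (t • B) *ᵥ x0c)) atTop (nhds (c0 • uc)) := by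
      simp only [hsplit]
      have h := (tendsto_const_nhds (x := c0 • uc) (f := (atTop : Filter ℝ))).add
        (hW _ (hsubmem x0c))
      rw [add_zero] at h
      exact h
    set γ : ℝ := c0.re with hγdef
    have hcoord : ∀ i, Tendsto (fun t : ℝ => Real.exp (-(lam * t)) * X t i)
        atTop (nhds (γ * u i)) := by
      intro i
      have h1 : Tendsto (fun t : ℝ => (Complex.exp (-(lam * t)) •
          (NormedSpace.exp (t • B) *ᵥ x0c)) i) atTop (nhds ((c0 • uc) i)) :=
        ((continuous_apply i).tendsto _).comp hmain
      have h2 := (Complex.continuous_re.tendsto _).comp h1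
      have h3 : ∀ t : ℝ, ((Complex.exp (-(lam * t)) •
          (NormedSpace.exp (t • B) *ᵥ x0c)) i).re = Real.exp (-(lam * t)) * X t i := by
        intro t
        rw [← hsol t]
        have he : Complex.exp (-((lam : ℂ) * (t : ℂ))) = ((Real.exp (-(lam * t)) : ℝ) : ℂ) := by
          rw [Complex.ofReal_exp]
          push_cast
          ring_nf
        rw [Pi.smul_apply, smul_eq_mul, hZdef]
        rw [he, ← Complex.ofReal_mul, Complex.ofReal_re]
      have h4 : ((c0 • uc) i).re = γ * u i := by
        rw [Pi.smul_apply, smul_eq_mul, hucdef, Complex.mul_re]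
        simp [hγdef]
      rw [← h4]
      exact h2.congr h3
    have hsumlim : Tendsto (fun t : ℝ => Real.exp (-(lam * t)) * ∑ i, X t i)
        atTop (nhds γ) := by
      have h := tendsto_finset_sum Finset.univ (fun i (_ : i ∈ Finset.univ) => hcoord i)
      have hval : ∑ i, γ * u i = γ := by rw [← Finset.mul_sum, husum, mul_one]
      rw [← hval]
      exact h.congr fun t => by rw [← Finset.mul_sum]
    have hγ : γ ≠ 0 := by
      intro h0
      apply hx0
      show X 0 ∈ (LinearMap.ker ℓ : Submodule ℝ (Fin n → ℝ))
      rw [LinearMap.mem_ker]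
      have h1 := hℓ (X 0)
      have h2 : c (fun i => ((X 0 i : ℝ) : ℂ)) = c0 := by rw [hc0def, hx0cdef, hZdef]
      rw [h2, ← hγdef, h0] at h1
      have h3 : (u i0)⁻¹ ≠ 0 := inv_ne_zero hi0
      exact (mul_eq_zero.mp h1).resolve_right h3
    have hident : ∀ t : ℝ, (∑ i, X t i)⁻¹ • X t =
        (Real.exp (-(lam * t)) * ∑ i, X t i)⁻¹ • (fun i => Real.exp (-(lam * t)) * X t i) := by
      intro t
      funext i
      simp only [Pi.smul_apply, smul_eq_mul]
      rw [mul_inv]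
      have hne := Real.exp_ne_zero (-(lam * t))
      calc (∑ j, X t j)⁻¹ * X t i
          = ((∑ j, X t j)⁻¹ * X t i) * ((Real.exp (-(lam * t)))⁻¹ * Real.exp (-(lam * t))) := by
            rw [inv_mul_cancel₀ hne, mul_one]
        _ = (Real.exp (-(lam * t)))⁻¹ * (∑ j, X t j)⁻¹ * (Real.exp (-(lam * t)) * X t i) := by
            ring
    simp only [hident]
    have hfinal := (hsumlim.inv₀ hγ).smul (tendsto_pi_nhds.mpr hcoord)
    have hval : γ⁻¹ • (fun i => γ * u i) = u := by
      funext i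
      simp only [Pi.smul_apply, smul_eq_mul, ← mul_assoc, inv_mul_cancel₀ hγ, one_mul]
    rw [← hval]
    exact hfinal
end

section
/- Let G be a directed acyclic graph on n vertices whose underlying undirected graph is connected. Then the number of edges of G that are determined by the ancestor–descendant relation (i.e., edges i → j such that no vertex k is simultaneously a descendant of i and an ancestor of j) is at least n − 1. -/
open Relation SimpleGraph

section Aux
variable {V : Type*} [Fintype V] (E : V → V → Prop)

/-- covering relation -/
private def Cov (a b : V) : Prop :=
  E a b ∧ ¬ ∃ k, Relation.TransGen E a k ∧ Relation.TransGen E k b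

omit [Fintype V] in
private lemma cov_ne (hacyclic : ∀ v, ¬ Relation.TransGen E v v)
    {a b : V} (h : Cov E a b) : a ≠ b := by
  rintro rfl
  exact hacyclic a (TransGen.single h.1)

private lemma key (hacyclic : ∀ v, ¬ Relation.TransGen E v v) : ∀ n a b, Set.ncard {k | TransGen E a k ∧ TransGen E k b} ≤ n →
    TransGen E a b → ReflTransGen (Cov E) a b := by
  intro n
  induction n using Nat.strong_induction_on with
  | _ n ih =>
    intro a b hm hab
    by_cases h : ∃ k, TransGen E a k ∧ TransGen E k b
    · obtain ⟨k, hak, hkb⟩ := h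
      have hsub1 : {j | TransGen E a j ∧ TransGen E j k} ⊂ {j | TransGen E a j ∧ TransGen E j b} := by
        constructor
        · rintro j ⟨h1, h2⟩
          exact ⟨h1, h2.trans hkb⟩
        · intro hs
          exact hacyclic k (hs ⟨hak, hkb⟩).2
      have hsub2 : {j | TransGen E k j ∧ TransGen E j b} ⊂ {j | TransGen E a j ∧ TransGen E j b} := by
        constructor
        · rintro j ⟨h1, h2⟩
          exact ⟨hak.trans h1, h2⟩
        · intro hs
          exact hacyclic k (hs ⟨hak, hkb⟩).1
      have hfin : {j | TransGen E a j ∧ TransGen E j b}.Finite := Set.toFinite _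
      have h1 := Set.ncard_lt_ncard hsub1 hfin
      have h2 := Set.ncard_lt_ncard hsub2 hfin
      exact (ih _ (lt_of_lt_of_le h1 hm) a k le_rfl hak).trans
        (ih _ (lt_of_lt_of_le h2 hm) k b le_rfl hkb)
    · obtain ⟨c, hc, hcb⟩ := TransGen.head'_iff.1 hab
      rcases hcb.cases_head with rfl | ⟨d, hd, hdb⟩
      · exact ReflTransGen.single ⟨hc, h⟩
      · exact absurd ⟨c, TransGen.single hc, TransGen.head' hd hdb⟩ h

end Aux

/-- A connected DAG on n vertices has at least n − 1 edges identifiable from the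
ancestor–descendant relation, namely the covering edges i → j such that no
vertex k is simultaneously a descendant of i and an ancestor of j. -/
theorem connected_dag_covering_edges_lower_bound
    {V : Type*} [Fintype V] (E : V → V → Prop)
    (hacyclic : ∀ v, ¬ Relation.TransGen E v v)
    (hconn : ∀ u v : V, Relation.ReflTransGen (fun a b => E a b ∨ E b a) u v) :
    Fintype.card V - 1 ≤
      Set.ncard {p : V × V | E p.1 p.2 ∧
        ¬ ∃ k, Relation.TransGen E p.1 k ∧ Relation.TransGen E k p.2} := by
  classical
  rcases isEmpty_or_nonempty V with hV | hV
  · simp [Fintype.card_eq_zero]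
  -- the covering graph
  set G : SimpleGraph V :=
    { Adj := fun a b => Cov E a b ∨ Cov E b a
      symm := ⟨by intro a b h; tauto⟩
      loopless := ⟨by intro a h; rcases h with h | h <;> exact cov_ne E hacyclic h rfl⟩ }
    with hGdef
  have hadj : ∀ a b, E a b → G.Reachable a b := by
    intro a b hab
    rw [reachable_iff_reflTransGen]
    exact ReflTransGen.mono (fun x y h => Or.inl h) _ _ (key E hacyclic _ a b le_rfl (TransGen.single hab))
  have hreach : ∀ u v : V, G.Reachable u v := by
    intro u v
    induction hconn u v with
    | refl => rfl
    | tail _ h2 ih =>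
      rcases h2 with h2 | h2
      · exact ih.trans (hadj _ _ h2)
      · exact ih.trans (hadj _ _ h2).symm
  -- root and distance
  obtain ⟨r⟩ := hV
  set S := {p : V × V | E p.1 p.2 ∧
      ¬ ∃ k, Relation.TransGen E p.1 k ∧ Relation.TransGen E k p.2} with hSdef
  -- for each v ≠ r, an incident covering pair going strictly closer to r
  have exists_pair : ∀ v : V, v ≠ r → ∃ p : V × V, p ∈ S ∧
      ((p.1 = v ∧ G.dist p.2 r < G.dist v r) ∨ (p.2 = v ∧ G.dist p.1 r < G.dist v r)) := by
    intro v hv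
    obtain ⟨p, hp⟩ := (hreach v r).exists_walk_length_eq_dist
    have hdpos : 0 < G.dist v r := (hreach v r).pos_dist_of_ne hv
    cases p with
    | nil => exact absurd rfl hv
    | cons h q =>
      rename_i w
      have hq : G.dist w r < G.dist v r := by
        have := G.dist_le q
        simp only [Walk.length_cons] at hp
        omega
      rcases h with h | h
      · exact ⟨(v, w), h, Or.inl ⟨rfl, hq⟩⟩
      · exact ⟨(w, v), h, Or.inr ⟨rfl, hq⟩⟩
  -- inject
  have hfin : S.Finite := Set.toFinite _
  haveI : Fintype S := hfin.fintype
  have hcard : Fintype.card {v : V // v ≠ r} ≤ Fintype.card S := by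
    apply Fintype.card_le_of_injective
      (fun v => ⟨(exists_pair v.1 v.2).choose, (exists_pair v.1 v.2).choose_spec.1⟩)
    rintro ⟨v, hv⟩ ⟨v', hv'⟩ heq
    simp only [Subtype.mk.injEq] at heq ⊢
    have h1 := (exists_pair v hv).choose_spec.2
    have h2 := (exists_pair v' hv').choose_spec.2
    rw [heq] at h1
    set p := (exists_pair v' hv').choose
    rcases h1 with ⟨e1, d1⟩ | ⟨e1, d1⟩ <;> rcases h2 with ⟨e2, d2⟩ | ⟨e2, d2⟩
    · rw [← e1, ← e2]
    · rw [e2] at d1; rw [e1] at d2; omega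
    · rw [e2] at d1; rw [e1] at d2; omega
    · rw [← e1, ← e2]
  have h1 : Fintype.card {v : V // v ≠ r} = Fintype.card V - 1 := by
    rw [Fintype.card_subtype_compl]
    simp
  have h2 : S.ncard = Fintype.card S := by
    rw [Set.ncard_eq_toFinset_card', Set.toFinset_card]
  rw [h2]
  omega
end

section
/- Consider the coloring of ℤⁿ where a node with coordinate (x₁,...,xₙ) is colored black if and only if a₁x₁ + ⋯ + aₙxₙ ≡ 0 (mod 2n/k + 1), where k divides n and the coefficient sequence (a₁,...,aₙ) consists of k consecutive copies of (1, 2, ..., n/k). Then: (1) no two black nodes are neighboring; (2) every white node is neighboring to exactly k black nodes; (3) the density of black nodes is k/(2n + k). -/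
/-!
Write `n = k q`, so the modulus is `m = 2q + 1` and every weight `aᵢ` lies in `[1, q]`.
Stepping from `x` to a neighbour changes `a ⬝ᵥ x` by `±aᵢ`, a nonzero number in `[-q, q]`;
two numbers of `[-q, q]` are congruent modulo `2q + 1` only if they are equal. Hence black nodes
are never adjacent, and the black neighbours of a white node `x` are obtained by moving, in the
direction of the sign of the balanced residue `r` of `-(a ⬝ᵥ x)`, along one of the coordinates of
weight `|r|`; each weight in `[1, q]` occurs exactly `k` times. For the density, reduction modulo
`m` identifies the box `[0, m)ⁿ` with `(ℤ/m)ⁿ`, and the black points with the kernel of the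
linear form `a ⬝ᵥ ·`, which is onto since the first weight is `1`; so there are `mⁿ⁻¹` of them.
-/

/-- Two nodes of ℤⁿ are neighboring if they differ by 1 in exactly one coordinate. -/
def LatticeNeighbor {n : ℕ} (x y : Fin n → ℤ) : Prop :=
  ∃ i, (y i = x i + 1 ∨ y i = x i - 1) ∧ ∀ j, j ≠ i → y j = x j

lemma latticeNeighbor_iff {n : ℕ} {x y : Fin n → ℤ} :
    LatticeNeighbor x y ↔ ∃ i, ∃ ε : ℤ, (ε = 1 ∨ ε = -1) ∧ y = x + Pi.single i ε := by
  constructor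
  · rintro ⟨i, hi, hrest⟩
    refine ⟨i, y i - x i, by omega, funext fun j => ?_⟩
    rcases eq_or_ne j i with rfl | hj
    · simp
    · simp [hrest j hj, hj]
  · rintro ⟨i, ε, hε, rfl⟩
    exact ⟨i, by rw [Pi.add_apply, Pi.single_eq_same]; omega, fun j hj => by simp [hj]⟩

lemma add_single_injective {ι M : Type*} [DecidableEq ι] [AddGroup M] (x : ι → M) {s : M}
    (hs : s ≠ 0) : Function.Injective fun i => x + Pi.single i s := by
  intro i j h
  by_contra hij
  simpa [hij, hs] using congrFun (add_left_cancel h) i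

lemma not_dvd_dotProduct_of_latticeNeighbor {n : ℕ} {a x y : Fin n → ℤ} {m : ℤ}
    (ha : ∀ i, ¬ m ∣ a i) (hx : m ∣ a ⬝ᵥ x) (hxy : LatticeNeighbor x y) : ¬ m ∣ a ⬝ᵥ y := by
  obtain ⟨i, ε, hε, rfl⟩ := latticeNeighbor_iff.mp hxy
  rw [dotProduct_add, dotProduct_single, dvd_add_right hx]
  rcases hε with rfl | rfl <;> simpa using ha i

lemma dvd_sub_iff_eq_of_abs_le {q u w : ℤ} (hu : |u| ≤ q) (hw : |w| ≤ q) :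
    2 * q + 1 ∣ u - w ↔ u = w := by
  refine ⟨fun h => sub_eq_zero.mp (Int.eq_zero_of_abs_lt_dvd h ?_), fun h => by simp [h]⟩
  rw [abs_le] at hu hw
  rw [abs_lt]
  constructor <;> linarith

lemma mul_eq_iff_eq_abs_and_eq_sign {b ε r : ℤ} (hb : 0 < b) (hε : ε = 1 ∨ ε = -1) :
    b * ε = r ↔ b = |r| ∧ ε = r.sign := by
  rcases hε with rfl | rfl
  · rw [eq_comm (a := (1 : ℤ)), Int.sign_eq_one_iff_pos]
    rcases abs_cases r with ⟨h, _⟩ | ⟨h, _⟩ <;> rw [h] <;> constructor <;> intro <;> omega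
  · rw [eq_comm (a := (-1 : ℤ)), Int.sign_eq_neg_one_iff_neg]
    rcases abs_cases r with ⟨h, _⟩ | ⟨h, _⟩ <;> rw [h] <;> constructor <;> intro <;> omega

lemma setOf_latticeNeighbor_dvd_eq_image {n q : ℕ} {a : Fin n → ℤ} (ha : ∀ i, 0 < a i ∧ a i ≤ q)
    {x : Fin n → ℤ} {r : ℤ} (hr : 2 * (q : ℤ) + 1 ∣ a ⬝ᵥ x + r) (hrq : |r| ≤ q) :
    {y | LatticeNeighbor x y ∧ 2 * (q : ℤ) + 1 ∣ a ⬝ᵥ y} =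
      (fun i => x + Pi.single i r.sign) '' {i | a i = |r|} := by
  have key (i : Fin n) {ε : ℤ} (hε : ε = 1 ∨ ε = -1) :
      2 * (q : ℤ) + 1 ∣ a ⬝ᵥ (x + Pi.single i ε) ↔ a i = |r| ∧ ε = r.sign := by
    have hai : |a i * ε| ≤ q := by
      rcases hε with rfl | rfl <;> simp [abs_of_pos (ha i).1, (ha i).2]
    rw [← mul_eq_iff_eq_abs_and_eq_sign (ha i).1 hε, ← dvd_sub_iff_eq_of_abs_le hai hrq,
      dotProduct_add, dotProduct_single, ← dvd_sub_right hr, dvd_sub_comm]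
    ring_nf
  ext y
  simp only [Set.mem_ofPred_eq, Set.mem_image, latticeNeighbor_iff]
  constructor
  · rintro ⟨⟨i, ε, hε, rfl⟩, hy⟩
    obtain ⟨hi, rfl⟩ := (key i hε).mp hy
    exact ⟨i, hi, rfl⟩
  · rintro ⟨i, hi, rfl⟩
    have hsign : r.sign = 1 ∨ r.sign = -1 := by
      rcases lt_trichotomy r 0 with h | rfl | h
      · exact .inr (Int.sign_eq_neg_one_of_neg h)
      · exact absurd hi (by simpa using (ha i).1.ne')
      · exact .inl (Int.sign_eq_one_of_pos h)
    exact ⟨⟨i, r.sign, hsign, rfl⟩, (key i hsign).mpr ⟨hi, rfl⟩⟩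

lemma exists_ncard_latticeNeighbor_dvd_eq {n q : ℕ} {a : Fin n → ℤ}
    (ha : ∀ i, 0 < a i ∧ a i ≤ q) {x : Fin n → ℤ} (hx : ¬ 2 * (q : ℤ) + 1 ∣ a ⬝ᵥ x) :
    ∃ v : ℤ, 0 < v ∧ v ≤ q ∧
      {y | LatticeNeighbor x y ∧ 2 * (q : ℤ) + 1 ∣ a ⬝ᵥ y}.ncard = {i | a i = v}.ncard := by
  set r := Int.bmod (-(a ⬝ᵥ x)) (2 * q + 1)
  have hr : 2 * (q : ℤ) + 1 ∣ a ⬝ᵥ x + r := by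
    have h : -(a ⬝ᵥ x) ≡ r [ZMOD (2 * q + 1 : ℕ)] := Int.bmod_emod.symm
    simpa [add_comm] using h.dvd
  have hrq : |r| ≤ q := by
    have h1 := Int.le_bmod (x := -(a ⬝ᵥ x)) (m := 2 * q + 1) (by omega)
    have h2 := Int.bmod_lt (x := -(a ⬝ᵥ x)) (m := 2 * q + 1) (by omega)
    push_cast at h1 h2
    rw [abs_le]
    omega
  have hr0 : r ≠ 0 := by
    rintro h
    rw [h, add_zero] at hr
    exact hx hr
  refine ⟨|r|, abs_pos.mpr hr0, hrq, ?_⟩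
  rw [setOf_latticeNeighbor_dvd_eq_image ha hr hrq,
    Set.ncard_image_of_injective _ (add_single_injective x (by simpa using hr0))]

lemma ncard_fin_eq_count (p : ℕ → Prop) [DecidablePred p] (n : ℕ) :
    {i : Fin n | p i}.ncard = Nat.count p n := by
  rw [Nat.count_eq_card_fintype, Fintype.card_eq_nat_card, ← Nat.card_coe_set_eq]
  exact Nat.card_congr
    ⟨fun i => ⟨i.1, i.1.2, i.2⟩, fun k => ⟨⟨k.1, k.2.1⟩, k.2.2⟩, fun _ => rfl, fun _ => rfl⟩

lemma ncard_emod_add_one_eq {k q : ℕ} {v : ℤ} (hv0 : 0 < v) (hvq : v ≤ q) :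
    {i : Fin (k * q) | ((i : ℕ) : ℤ) % q + 1 = v}.ncard = k := by
  have hq : 0 < q := by omega
  have hset : {i : Fin (k * q) | ((i : ℕ) : ℤ) % q + 1 = v} =
      {i : Fin (k * q) | (i : ℕ) ≡ (v - 1).toNat [MOD q]} := by
    ext i
    rw [Set.mem_ofPred_eq, Set.mem_ofPred_eq, Nat.ModEq,
      Nat.mod_eq_of_lt (show (v - 1).toNat < q by omega), ← Int.natCast_mod]
    omega
  rw [hset, ncard_fin_eq_count (· ≡ _ [MOD q]), Nat.count_modEq_card _ hq]
  simp [hq.ne']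

lemma card_dotProduct_eq_zero_mul_card {ι R : Type*} [Fintype ι] [Ring R] [Finite R]
    {a : ι → R} {i : ι} (ha : IsUnit (a i)) :
    Nat.card {v : ι → R // a ⬝ᵥ v = 0} * Nat.card R = Nat.card R ^ Fintype.card ι := by
  classical
  let f : (ι → R) →+ R := AddMonoidHom.mk' (a ⬝ᵥ ·) (dotProduct_add a)
  have hf : Function.Surjective f := by
    obtain ⟨u, hu⟩ := ha
    intro r
    refine ⟨Pi.single i (↑u⁻¹ * r), ?_⟩
    simp [f, dotProduct_single, ← hu]
  have := f.ker.card_mul_index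
  rw [AddSubgroup.index_ker, AddMonoidHom.range_eq_top.mpr hf, Nat.card_fun] at this
  simpa [f] using this

lemma ncard_box_eq_card_zmod {ι : Type*} {M : ℕ} [NeZero M] (P : (ι → ZMod M) → Prop) :
    {x : ι → ℤ | (∀ i, 0 ≤ x i ∧ x i < M) ∧ P (fun i => (x i : ZMod M))}.ncard =
      Nat.card {v // P v} := by
  have hval (z : ZMod M) : ((z.val : ℤ) : ZMod M) = z := by simp
  rw [← Nat.card_coe_set_eq]
  refine Nat.card_congr
    ⟨fun x => ⟨fun i => x.1 i, x.2.2⟩,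
     fun v => ⟨fun i => (v.1 i).val, fun i => ⟨by positivity, Nat.cast_lt.mpr (v.1 i).val_lt⟩,
       by simpa only [hval] using v.2⟩, fun x => ?_, fun v => ?_⟩
  · ext i
    exact (ZMod.val_intCast _).trans (Int.emod_eq_of_lt (x.2.1 i).1 (x.2.1 i).2)
  · ext i
    exact hval _

lemma ncard_box_dvd_dotProduct_mul_eq_pow {ι : Type*} [Fintype ι] {M : ℕ} [NeZero M]
    {a : ι → ℤ} {i₀ : ι} (hi₀ : IsUnit (a i₀ : ZMod M)) :
    {x : ι → ℤ | (∀ i, 0 ≤ x i ∧ x i < M) ∧ (M : ℤ) ∣ a ⬝ᵥ x}.ncard * M = M ^ Fintype.card ι := by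
  have hdvd (x : ι → ℤ) :
      (M : ℤ) ∣ a ⬝ᵥ x ↔ (fun i => (a i : ZMod M)) ⬝ᵥ (fun i => (x i : ZMod M)) = 0 := by
    rw [← ZMod.intCast_zmod_eq_zero_iff_dvd, ← eq_intCast (Int.castRingHom (ZMod M)),
      RingHom.map_dotProduct]
    rfl
  simp_rw [hdvd, ncard_box_eq_card_zmod (fun v => (fun i => (a i : ZMod M)) ⬝ᵥ v = 0)]
  simpa using card_dotProduct_eq_zero_mul_card (a := fun i => (a i : ZMod M)) hi₀

/-- Lattice coloring theorem (k ∣ n): coloring x black iff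
a₁x₁+⋯+aₙxₙ ≡ 0 (mod 2n/k+1), with coefficients k consecutive copies of
(1,…,n/k), black nodes are pairwise non-neighboring, every white node has
exactly k black neighbors, and the density of black nodes (computed over the
fundamental box [0, 2n/k+1)ⁿ) equals k/(2n+k). -/
theorem lattice_coloring_k_divides_n
    (n k : ℕ) (hn : 0 < n) (hk : 0 < k) (hkn : k ∣ n) :
    let m : ℤ := 2 * n / k + 1
    let a : Fin n → ℤ := fun i => (i : ℕ) % (n / k) + 1
    let Black : (Fin n → ℤ) → Prop := fun x => (∑ i, a i * x i) % m = 0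
    (∀ x y : Fin n → ℤ, Black x → Black y → ¬ LatticeNeighbor x y) ∧
    (∀ x : Fin n → ℤ, ¬ Black x →
      Set.ncard {y | LatticeNeighbor x y ∧ Black y} = k) ∧
    Set.ncard {x : Fin n → ℤ | (∀ i, 0 ≤ x i ∧ x i < m) ∧ Black x} * (2 * n + k)
      = k * m.toNat ^ n := by
  intro m a Black
  obtain ⟨q, rfl⟩ := hkn
  have hq : 0 < q := Nat.pos_of_mul_pos_left hn
  have hk0 : (k : ℤ) ≠ 0 := by exact_mod_cast hk.ne'
  have hnk : ((k * q : ℕ) : ℤ) / k = q := by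
    push_cast
    exact Int.mul_ediv_cancel_left _ hk0
  have hm : m = 2 * q + 1 := by
    simp only [m]
    push_cast
    rw [show (2 : ℤ) * (k * q) = k * (2 * q) by ring, Int.mul_ediv_cancel_left _ hk0]
  have ha (i : Fin (k * q)) : a i = ((i : ℕ) : ℤ) % q + 1 := by
    simp only [a, hnk]
  have ha_mem (i : Fin (k * q)) : 0 < a i ∧ a i ≤ q := by
    have := Int.emod_nonneg ((i : ℕ) : ℤ) (b := q) (by omega)
    have := Int.emod_lt_of_pos ((i : ℕ) : ℤ) (b := q) (by omega)
    rw [ha]; omega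
  have hblack (x : Fin (k * q) → ℤ) : Black x ↔ 2 * (q : ℤ) + 1 ∣ a ⬝ᵥ x := by
    rw [← hm, Int.dvd_iff_emod_eq_zero]
    rfl
  refine ⟨fun x y hx hy hxy => ?_, fun x hx => ?_, ?_⟩
  · rw [hblack] at hx hy
    refine not_dvd_dotProduct_of_latticeNeighbor (fun i hi => ?_) hx hxy hy
    linarith [Int.le_of_dvd (ha_mem i).1 hi, (ha_mem i).2]
  · obtain ⟨v, hv0, hvq, hcard⟩ :=
      exists_ncard_latticeNeighbor_dvd_eq ha_mem ((hblack x).not.mp hx)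
    simp only [hblack, hcard, ha]
    exact ncard_emod_add_one_eq hv0 hvq
  · have hcount := ncard_box_dvd_dotProduct_mul_eq_pow (M := 2 * q + 1) (a := a) (i₀ := ⟨0, hn⟩)
      (by simp [ha])
    have hM : ((2 * q + 1 : ℕ) : ℤ) = 2 * q + 1 := by push_cast; ring
    have hm_toNat : m.toNat = 2 * q + 1 := by omega
    rw [Fintype.card_fin, hM] at hcount
    rw [hm_toNat, ← hcount]
    simp only [hblack, hm]
    ring
end

section
/- Let k be a divisor of 2n that does not divide n. Color a node (x₁,...,xₙ) of ℤⁿ black if and only if a₁x₁ + ⋯ + aₙxₙ ≡ 0 (mod 2n/k + 1), where the coefficients (a₁,...,aₙ) consist of k/2 consecutive copies of (1, 2, ..., 2n/k). Then no two black nodes are neighboring, every white node is neighboring to exactly k black nodes, and the proportion of black nodes is k/(2n + k). -/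
private lemma count_mod_card (c d t : ℕ) (hd : 0 < d) (ht : t < d) :
    ((Finset.range (c * d)).filter (fun i => i % d = t)).card = c := by
  have h : ((Finset.range (c * d)).filter (fun i => i % d = t)).card
      = (Finset.range c).card := by
    apply Finset.card_bij (fun i _ => i / d)
    · intro i hi
      simp only [Finset.mem_filter, Finset.mem_range] at hi
      simp only [Finset.mem_range]
      exact Nat.div_lt_of_lt_mul (by rw [mul_comm]; exact hi.1)
    · intro i hi j hj hij
      simp only [Finset.mem_filter, Finset.mem_range] at hi hj
      have h1 : i = d * (i / d) + t := by rw [← hi.2]; exact (Nat.div_add_mod i d).symm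
      have h2 : j = d * (j / d) + t := by rw [← hj.2]; exact (Nat.div_add_mod j d).symm
      rw [h1, h2, hij]
    · intro j hj
      simp only [Finset.mem_range] at hj
      refine ⟨j * d + t, ?_, ?_⟩
      · simp only [Finset.mem_filter, Finset.mem_range]
        constructor
        · calc j * d + t < j * d + d := by omega
            _ = (j + 1) * d := by ring
            _ ≤ c * d := Nat.mul_le_mul_right d hj
        · rw [mul_comm j d, Nat.mul_add_mod, Nat.mod_eq_of_lt ht]
      · rw [mul_comm, Nat.mul_add_div hd, Nat.div_eq_of_lt ht]
        omega
  rw [h, Finset.card_range]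

private lemma card_fin_filter_mod (n c d t : ℕ) (hn : n = c * d) (hd : 0 < d) (ht : t < d) :
    (Finset.univ.filter (fun i : Fin n => (i : ℕ) % d = t)).card = c := by
  have h : (Finset.univ.filter (fun i : Fin n => (i : ℕ) % d = t)).card
      = ((Finset.range n).filter (fun i => i % d = t)).card := by
    refine Finset.card_bij (fun i _ => (i : ℕ)) ?_ ?_ ?_
    · intro i hi
      simp only [Finset.mem_filter, Finset.mem_univ, true_and] at hi
      simp only [Finset.mem_filter, Finset.mem_range]
      exact ⟨i.isLt, hi⟩
    · intro i _ j _ hij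
      exact Fin.val_injective hij
    · intro j hj
      simp only [Finset.mem_filter, Finset.mem_range] at hj
      exact ⟨⟨j, hj.1⟩, by simp [hj.2], rfl⟩
  rw [h, hn]
  exact count_mod_card c d t hd ht

set_option maxHeartbeats 1000000 in
/-- Lattice coloring theorem (k ∣ 2n, k ∤ n): coloring x black iff
a₁x₁+⋯+aₙxₙ ≡ 0 (mod 2n/k+1), with coefficients k/2 consecutive copies of
(1,…,2n/k), black nodes are pairwise non-neighboring, every white node has
exactly k black neighbors, and the density of black nodes (computed over the
fundamental box [0, 2n/k+1)ⁿ) equals k/(2n+k). -/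
theorem lattice_coloring_k_divides_two_n
    (n k : ℕ) (hn : 0 < n) (hk : 0 < k) (hk2n : k ∣ 2 * n) (hkn : ¬ k ∣ n) :
    let m : ℤ := 2 * n / k + 1
    let a : Fin n → ℤ := fun i => (i : ℕ) % (2 * n / k) + 1
    let Black : (Fin n → ℤ) → Prop := fun x => (∑ i, a i * x i) % m = 0
    (∀ x y : Fin n → ℤ, Black x → Black y → ¬ LatticeNeighbor x y) ∧
    (∀ x : Fin n → ℤ, ¬ Black x →
      Set.ncard {y | LatticeNeighbor x y ∧ Black y} = k) ∧
    Set.ncard {x : Fin n → ℤ | (∀ i, 0 ≤ x i ∧ x i < m) ∧ Black x} * (2 * n + k)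
      = k * m.toNat ^ n := by
  intro m a Black
  classical
  obtain ⟨d, hd2n⟩ := hk2n
  have hdpos : 0 < d := by
    rcases Nat.eq_zero_or_pos d with h | h
    · subst h; simp at hd2n; omega
    · exact h
  have hdodd : d % 2 = 1 := by
    rcases Nat.even_or_odd d with ⟨e, he⟩ | ⟨f, hf⟩
    · exfalso
      refine hkn ⟨e, ?_⟩
      have h2 : 2 * n = 2 * (k * e) := by rw [hd2n, he]; ring
      exact Nat.eq_of_mul_eq_mul_left two_pos h2
    · omega
  obtain ⟨c, hc⟩ : 2 ∣ k := by
    rcases Nat.even_or_odd k with h | h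
    · exact h.two_dvd
    · exfalso
      have hodd : Odd (k * d) := h.mul (Nat.odd_iff.mpr hdodd)
      rw [← hd2n] at hodd
      exact (Nat.not_odd_iff_even.mpr (even_two_mul n)) hodd
  have hncd : n = c * d := by
    have h2 : 2 * n = 2 * (c * d) := by rw [hd2n, hc]; ring
    exact Nat.eq_of_mul_eq_mul_left two_pos h2
  have hcpos : 0 < c := by
    rcases Nat.eq_zero_or_pos c with h | h
    · subst h; simp at hncd; omega
    · exact h
  have hDcast : (2 * (n : ℤ)) / (k : ℤ) = (d : ℤ) := by
    have h1 : (2 * (n : ℤ)) = (k : ℤ) * (d : ℤ) := by exact_mod_cast hd2n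
    rw [h1, Int.mul_ediv_cancel_left _ (by exact_mod_cast hk.ne')]
  have hm : m = (d : ℤ) + 1 := by
    simp only [m]
    rw [hDcast]
  have hmpos : 0 < m := by rw [hm]; omega
  have ha : ∀ i : Fin n, a i = (((i : ℕ) % d : ℕ) : ℤ) + 1 := by
    intro i
    simp only [a]
    rw [hDcast]
    norm_cast
  have ha_bounds : ∀ i : Fin n, 1 ≤ a i ∧ a i ≤ (d : ℤ) := by
    intro i
    rw [ha i]
    have := Nat.mod_lt (i : ℕ) hdpos
    constructor
    · omega
    · have : (((i : ℕ) % d : ℕ) : ℤ) < (d : ℤ) := by exact_mod_cast this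
      omega
  have hsum : ∀ (x y : Fin n → ℤ) (i : Fin n), (∀ j, j ≠ i → y j = x j) →
      (∑ j, a j * y j) - (∑ j, a j * x j) = a i * (y i - x i) := by
    intro x y i h
    rw [← Finset.sum_sub_distrib, Finset.sum_eq_single i]
    · ring
    · intro j _ hj; rw [h j hj]; ring
    · intro hi; exact absurd (Finset.mem_univ i) hi
  refine ⟨?_, ?_, ?_⟩
  · -- part 1
    intro x y hx hy hnb
    obtain ⟨i, hi1, hi2⟩ := hnb
    have h := hsum x y i hi2
    have hdvd_x : m ∣ ∑ j, a j * x j := Int.dvd_of_emod_eq_zero hx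
    have hdvd_y : m ∣ ∑ j, a j * y j := Int.dvd_of_emod_eq_zero hy
    have hdvd : m ∣ a i * (y i - x i) := by rw [← h]; exact dvd_sub hdvd_y hdvd_x
    have hb := ha_bounds i
    have h3 : m ∣ a i := by
      rcases hi1 with h1 | h1
      · have e : a i * (y i - x i) = a i := by rw [h1]; ring
        rwa [e] at hdvd
      · have e : a i * (y i - x i) = -a i := by rw [h1]; ring
        rw [e] at hdvd
        exact dvd_neg.mp hdvd
    have h4 := Int.eq_zero_of_abs_lt_dvd h3 (by rw [abs_of_pos (by omega)]; omega)
    omega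
  · -- part 2
    intro x hx
    have hx' : (∑ j, a j * x j) % m ≠ 0 := hx
    set S0 : ℤ := ∑ j, a j * x j with hS0
    set r : ℤ := S0 % m with hr
    have hr0 : 0 ≤ r := Int.emod_nonneg S0 hmpos.ne'
    have hrlt : r < m := Int.emod_lt_of_pos S0 hmpos
    have hrne : r ≠ 0 := hx'
    have hSr : m ∣ S0 - r := Int.dvd_self_sub_of_emod_eq rfl
    let F1 : Finset (Fin n) := Finset.univ.filter (fun i => a i = m - r)
    let F2 : Finset (Fin n) := Finset.univ.filter (fun i => a i = r)
    let G : Finset (Fin n → ℤ) :=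
      F1.image (fun i => Function.update x i (x i + 1)) ∪
      F2.image (fun i => Function.update x i (x i - 1))
    have hset : {y | LatticeNeighbor x y ∧ Black y} = ↑G := by
      ext y
      simp only [Set.mem_setOf_eq, G, Finset.coe_union, Set.mem_union, Finset.coe_image,
        Set.mem_image, Finset.mem_coe, Finset.mem_filter, Finset.mem_univ, true_and, F1, F2]
      constructor
      · rintro ⟨⟨i, hi1, hi2⟩, hy⟩
        have hyx : (∑ j, a j * y j) - S0 = a i * (y i - x i) := hsum x y i hi2
        have hdy : m ∣ ∑ j, a j * y j := Int.dvd_of_emod_eq_zero hy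
        have hb := ha_bounds i
        rcases hi1 with h1 | h1
        · left
          refine ⟨i, ?_, ?_⟩
          · -- a i = m - r
            have e : (∑ j, a j * y j) = S0 + a i := by
              rw [h1] at hyx; linarith [hyx]
            have hdvd : m ∣ r + a i := by
              have : r + a i = (∑ j, a j * y j) - (S0 - r) := by rw [e]; ring
              rw [this]
              exact dvd_sub hdy hSr
            have hdvd2 : m ∣ r + a i - m := dvd_sub hdvd dvd_rfl
            have := Int.eq_zero_of_abs_lt_dvd hdvd2 (by rw [abs_lt]; omega)
            omega
          · funext j
            by_cases hj : j = i
            · subst hj; rw [Function.update_self]; exact h1.symm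
            · rw [Function.update_of_ne hj]; exact (hi2 j hj).symm
        · right
          refine ⟨i, ?_, ?_⟩
          · have e : (∑ j, a j * y j) = S0 - a i := by
              rw [h1] at hyx; linarith [hyx]
            have hdvd : m ∣ r - a i := by
              have : r - a i = (∑ j, a j * y j) - (S0 - r) := by rw [e]; ring
              rw [this]
              exact dvd_sub hdy hSr
            have := Int.eq_zero_of_abs_lt_dvd hdvd (by rw [abs_lt]; omega)
            omega
          · funext j
            by_cases hj : j = i
            · subst hj; rw [Function.update_self]; exact h1.symm
            · rw [Function.update_of_ne hj]; exact (hi2 j hj).symm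
      · rintro (⟨i, hai, rfl⟩ | ⟨i, hai, rfl⟩)
        · constructor
          · exact ⟨i, Or.inl (by rw [Function.update_self]),
              fun j hj => Function.update_of_ne hj _ _⟩
          · show (∑ j, a j * Function.update x i (x i + 1) j) % m = 0
            have h := hsum x (Function.update x i (x i + 1)) i
              (fun j hj => Function.update_of_ne hj _ _)
            rw [Function.update_self] at h
            have e : (∑ j, a j * Function.update x i (x i + 1) j) = (S0 - r) + m := by
              rw [hai] at h; linarith [h]
            rw [e]
            exact Int.emod_eq_zero_of_dvd (dvd_add hSr dvd_rfl)
        · constructor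
          · exact ⟨i, Or.inr (by rw [Function.update_self]),
              fun j hj => Function.update_of_ne hj _ _⟩
          · show (∑ j, a j * Function.update x i (x i - 1) j) % m = 0
            have h := hsum x (Function.update x i (x i - 1)) i
              (fun j hj => Function.update_of_ne hj _ _)
            rw [Function.update_self] at h
            have e : (∑ j, a j * Function.update x i (x i - 1) j) = S0 - r := by
              rw [hai] at h; linarith [h]
            rw [e]
            exact Int.emod_eq_zero_of_dvd hSr
    rw [hset, Set.ncard_coe_finset]
    have hinj1 : Set.InjOn (fun i => Function.update x i (x i + 1)) ↑F1 := by
      intro i _ j _ hij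
      by_contra hne
      have := congrFun hij i
      simp only [Function.update_self, Function.update_of_ne hne] at this
      omega
    have hinj2 : Set.InjOn (fun i => Function.update x i (x i - 1)) ↑F2 := by
      intro i _ j _ hij
      by_contra hne
      have := congrFun hij i
      simp only [Function.update_self, Function.update_of_ne hne] at this
      omega
    have hdisj : Disjoint (F1.image (fun i => Function.update x i (x i + 1)))
        (F2.image (fun i => Function.update x i (x i - 1))) := by
      rw [Finset.disjoint_left]
      rintro y hy1 hy2
      obtain ⟨i, _, rfl⟩ := Finset.mem_image.mp hy1
      obtain ⟨j, _, hj⟩ := Finset.mem_image.mp hy2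
      by_cases hij : j = i
      · subst hij
        have := congrFun hj j
        simp only [Function.update_self] at this
        omega
      · have := congrFun hj j
        simp only [Function.update_self, Function.update_of_ne hij] at this
        omega
    have hcardv : ∀ v : ℤ, 1 ≤ v → v ≤ (d : ℤ) →
        (Finset.univ.filter (fun i : Fin n => a i = v)).card = c := by
      intro v h1 h2
      have heq : (Finset.univ.filter (fun i : Fin n => a i = v)) =
          (Finset.univ.filter (fun i : Fin n => (i : ℕ) % d = (v - 1).toNat)) := by
        apply Finset.filter_congr
        intro i _
        rw [ha i]
        constructor <;> intro h <;> omega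
      rw [heq]
      exact card_fin_filter_mod n c d _ hncd hdpos (by omega)
    rw [Finset.card_union_of_disjoint hdisj, Finset.card_image_of_injOn hinj1,
      Finset.card_image_of_injOn hinj2]
    have hF1 : F1.card = c := hcardv (m - r) (by omega) (by omega)
    have hF2 : F2.card = c := hcardv r (by omega) (by omega)
    rw [hF1, hF2]
    omega
  · -- part 3
    let box : Finset (Fin n → ℤ) := Fintype.piFinset (fun _ : Fin n => Finset.Ico (0 : ℤ) m)
    let B : Finset (Fin n → ℤ) := box.filter (fun x => (∑ i, a i * x i) % m = 0)
    have hset : {x : Fin n → ℤ | (∀ i, 0 ≤ x i ∧ x i < m) ∧ Black x} = ↑B := by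
      ext x
      simp only [Set.mem_setOf_eq, B, box, Finset.coe_filter, Fintype.mem_piFinset,
        Finset.mem_Ico, Black]
    rw [hset, Set.ncard_coe_finset]
    set i0 : Fin n := ⟨0, hn⟩ with hi0
    have hai0 : a i0 = 1 := by rw [ha]; simp
    let B0 : Finset (Fin n → ℤ) := box.filter (fun x => x i0 = 0)
    have hcardeq : B.card = B0.card := by
      apply Finset.card_bij' (fun x _ => Function.update x i0 0)
        (fun y _ => Function.update y i0 ((-(∑ j, a j * y j)) % m))
      · intro x hx
        simp only [B, box, Finset.mem_filter, Fintype.mem_piFinset, Finset.mem_Ico] at hx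
        simp only [B0, box, Finset.mem_filter, Fintype.mem_piFinset, Finset.mem_Ico]
        refine ⟨fun i => ?_, Function.update_self _ _ _⟩
        by_cases hi : i = i0
        · subst hi; rw [Function.update_self]; exact ⟨le_rfl, hmpos⟩
        · rw [Function.update_of_ne hi]; exact hx.1 i
      · intro y hy
        simp only [B0, box, Finset.mem_filter, Fintype.mem_piFinset, Finset.mem_Ico] at hy
        simp only [B, box, Finset.mem_filter, Fintype.mem_piFinset, Finset.mem_Ico]
        constructor
        · intro i
          by_cases hi : i = i0
          · subst hi; rw [Function.update_self]
            exact ⟨Int.emod_nonneg _ hmpos.ne', Int.emod_lt_of_pos _ hmpos⟩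
          · rw [Function.update_of_ne hi]; exact hy.1 i
        · set T : ℤ := ∑ j, a j * y j with hT
          have h := hsum y (Function.update y i0 ((-T) % m)) i0
            (fun j hj => Function.update_of_ne hj _ _)
          rw [Function.update_self, hai0, hy.2] at h
          have e : (∑ j, a j * Function.update y i0 ((-T) % m) j) = T + (-T) % m := by
            linarith [h]
          rw [e, add_comm, Int.emod_add_emod]
          simp
      · intro x hx
        simp only [B, box, Finset.mem_filter, Fintype.mem_piFinset, Finset.mem_Ico] at hx
        have h := hsum x (Function.update x i0 0) i0
          (fun j hj => Function.update_of_ne hj _ _)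
        rw [Function.update_self, hai0] at h
        have e : (∑ j, a j * Function.update x i0 0 j) = (∑ j, a j * x j) - x i0 := by
          linarith [h]
        funext j
        by_cases hj : j = i0
        · subst hj
          rw [Function.update_self, e]
          have hdvd : m ∣ ∑ i, a i * x i := Int.dvd_of_emod_eq_zero hx.2
          obtain ⟨q, hq⟩ := hdvd
          have e2 : -((∑ i, a i * x i) - x i0) = x i0 + m * (-q) := by rw [hq]; ring
          rw [e2, Int.add_mul_emod_self_left, Int.emod_eq_of_lt (hx.1 i0).1 (hx.1 i0).2]
        · rw [Function.update_of_ne hj, Function.update_of_ne hj]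
      · intro y hy
        simp only [B0, box, Finset.mem_filter, Fintype.mem_piFinset, Finset.mem_Ico] at hy
        funext j
        by_cases hj : j = i0
        · subst hj
          rw [Function.update_self, hy.2]
        · rw [Function.update_of_ne hj, Function.update_of_ne hj]
    have hB0eq : B0 = Fintype.piFinset
        (fun i : Fin n => if i = i0 then ({0} : Finset ℤ) else Finset.Ico 0 m) := by
      ext x
      simp only [B0, box, Finset.mem_filter, Fintype.mem_piFinset]
      constructor
      · rintro ⟨h1, h2⟩ i
        by_cases hi : i = i0
        · subst hi; simp [h2]
        · rw [if_neg hi]; exact h1 i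
      · intro h
        refine ⟨fun i => ?_, ?_⟩
        · by_cases hi : i = i0
          · have := h i
            rw [if_pos hi] at this
            simp only [Finset.mem_singleton] at this
            rw [this, Finset.mem_Ico]
            exact ⟨le_rfl, hmpos⟩
          · have := h i
            rwa [if_neg hi] at this
        · have := h i0
          rw [if_pos rfl] at this
          simpa using this
    have hB0card : B0.card = m.toNat ^ (n - 1) := by
      rw [hB0eq, Fintype.card_piFinset]
      have hterm : ∀ i : Fin n, ((if i = i0 then ({0} : Finset ℤ) else Finset.Ico 0 m)).card
          = if i = i0 then 1 else m.toNat := by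
        intro i
        split_ifs
        · simp
        · rw [Int.card_Ico]; simp
      calc (∏ i : Fin n, ((if i = i0 then ({0} : Finset ℤ) else Finset.Ico 0 m)).card)
          = ∏ i : Fin n, (if i = i0 then 1 else m.toNat) :=
            Finset.prod_congr rfl (fun i _ => hterm i)
        _ = (if i0 = i0 then 1 else m.toNat) *
              ∏ i ∈ Finset.univ.erase i0, (if i = i0 then 1 else m.toNat) :=
            (Finset.mul_prod_erase _ _ (Finset.mem_univ i0)).symm
        _ = ∏ i ∈ Finset.univ.erase i0, (m.toNat : ℕ) := by
            rw [if_pos rfl, one_mul]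
            exact Finset.prod_congr rfl (fun i hi => if_neg (Finset.ne_of_mem_erase hi))
        _ = m.toNat ^ (n - 1) := by
            rw [Finset.prod_const, Finset.card_erase_of_mem (Finset.mem_univ i0),
              Finset.card_univ, Fintype.card_fin]
    rw [hcardeq, hB0card]
    have hmt : m.toNat = d + 1 := by rw [hm]; omega
    rw [hmt]
    obtain ⟨n', rfl⟩ : ∃ n', n = n' + 1 := ⟨n - 1, by omega⟩
    have h2nk : 2 * (n' + 1) + k = k * (d + 1) := by
      rw [Nat.mul_add k d 1, ← hd2n, mul_one]
    rw [h2nk]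
    simp only [Nat.add_sub_cancel]
    ring
end

section
/- Let G be a directed graph on n gene vertices plus a phenotype vertex P such that every gene G_i has a directed path to P. Then the number of edges identifiable from the path-blocking relations for the phenotype (via the stated identification procedure) is at least n. -/
/-- `Blocks E i S`: every directed path (in the graph `E` on genes `Fin n` plus a
phenotype vertex `Sum.inr ()`) from gene `i` to the phenotype passes through a
gene of `S`. -/
def Blocks {n : ℕ} (E : (Fin n ⊕ Unit) → (Fin n ⊕ Unit) → Prop)
    (i : Fin n) (S : Set (Fin n)) : Prop :=
  ¬ Relation.ReflTransGen
      (fun a b => E a b ∧ ∀ s : Fin n, b = Sum.inl s → s ∉ S)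
      (Sum.inl i) (Sum.inr ())

/-- `MinBlock E i S`: S is a minimal blocking set for gene i, i.e. S ∈ β(Gᵢ). -/
def MinBlock {n : ℕ} (E : (Fin n ⊕ Unit) → (Fin n ⊕ Unit) → Prop)
    (i : Fin n) (S : Set (Fin n)) : Prop :=
  i ∉ S ∧ Blocks E i S ∧ ∀ S' : Set (Fin n), S' ⊂ S → ¬ Blocks E i S'

/-- The empty set never blocks a gene that has a path to the phenotype. -/
lemma not_blocks_empty {n : ℕ} (E : (Fin n ⊕ Unit) → (Fin n ⊕ Unit) → Prop)
    (i : Fin n) (h : Relation.TransGen E (Sum.inl i) (Sum.inr ())) :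
    ¬ Blocks E i (∅ : Set (Fin n)) := by
  intro hB
  exact hB (Relation.ReflTransGen.mono
    (p := fun a b => E a b ∧ ∀ s : Fin n, b = Sum.inl s → s ∉ (∅ : Set (Fin n)))
    (fun a b hab => ⟨hab, fun s _ hs => hs⟩) _ _ (Relation.TransGen.to_reflTransGen h))

/-- If every gene has a directed path to the phenotype P, then at least n edges
are identified by the path-blocking procedure: the edge i → P is identified when
β(Gᵢ) = ∅, and the edge i → j is identified when no S ∈ β(Gᵢ) avoiding j fails
to block j, while some S ∈ β(Gᵢ) contains j. -/
theorem path_blocking_identifies_n_edges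
    {n : ℕ} (E : (Fin n ⊕ Unit) → (Fin n ⊕ Unit) → Prop)
    (hpath : ∀ i : Fin n, Relation.TransGen E (Sum.inl i) (Sum.inr ())) :
    n ≤ Set.ncard {e : Fin n × (Fin n ⊕ Unit) |
      (e.2 = Sum.inr () ∧ ∀ S : Set (Fin n), e.1 ∉ S → ¬ Blocks E e.1 S) ∨
      (∃ j : Fin n, e.2 = Sum.inl j ∧
        ¬ (∃ S : Set (Fin n), MinBlock E e.1 S ∧ j ∉ S ∧ ¬ Blocks E j S) ∧
        (∃ S : Set (Fin n), MinBlock E e.1 S ∧ j ∈ S))} := by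
  classical
  set T : Set (Fin n × (Fin n ⊕ Unit)) := {e : Fin n × (Fin n ⊕ Unit) |
      (e.2 = Sum.inr () ∧ ∀ S : Set (Fin n), e.1 ∉ S → ¬ Blocks E e.1 S) ∨
      (∃ j : Fin n, e.2 = Sum.inl j ∧
        ¬ (∃ S : Set (Fin n), MinBlock E e.1 S ∧ j ∉ S ∧ ¬ Blocks E j S) ∧
        (∃ S : Set (Fin n), MinBlock E e.1 S ∧ j ∈ S))} with hT
  have key : ∀ i : Fin n, ∃ t, (i, t) ∈ T := by
    intro i
    by_cases hdir : E (Sum.inl i) (Sum.inr ())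
    · refine ⟨Sum.inr (), Or.inl ⟨rfl, ?_⟩⟩
      intro S _ hB
      exact hB (Relation.ReflTransGen.single ⟨hdir, fun s hs => by cases hs⟩)
    · -- the set of out-neighbours of i (minus i itself) blocks i
      set N : Set (Fin n) := {s | E (Sum.inl i) (Sum.inl s) ∧ s ≠ i} with hN
      have hNblocks : Blocks E i N := by
        intro hwalk
        have aux : ∀ b, Relation.ReflTransGen
            (fun a b => E a b ∧ ∀ s : Fin n, b = Sum.inl s → s ∉ N)
            (Sum.inl i) b → b = Sum.inl i := by
          intro b hb
          induction hb with
          | refl => rfl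
          | tail hab hbc ih =>
            rename_i b' c'
            subst ih
            match c' with
            | Sum.inr u => exact absurd hbc.1 hdir
            | Sum.inl s =>
              have hs := hbc.2 s rfl
              have : s = i := by
                by_contra hsi
                exact hs ⟨hbc.1, hsi⟩
              rw [this]
        cases aux _ hwalk
      -- pick a minimal blocking set inside N
      have hwf : WellFounded ((· < ·) : Set (Fin n) → Set (Fin n) → Prop) :=
        Finite.to_wellFoundedLT.wf
      obtain ⟨S₀, hS₀F, hS₀min⟩ := hwf.has_min {S | S ⊆ N ∧ Blocks E i S}
        ⟨N, subset_rfl, hNblocks⟩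
      have hiS₀ : i ∉ S₀ := fun h => (hS₀F.1 h).2 rfl
      have hmin : MinBlock E i S₀ := by
        refine ⟨hiS₀, hS₀F.2, fun S' hS' hB => ?_⟩
        exact hS₀min S' ⟨hS'.subset.trans hS₀F.1, hB⟩ hS'
      have hne : S₀.Nonempty := by
        rcases Set.eq_empty_or_nonempty S₀ with h | h
        · exact absurd (h ▸ hS₀F.2) (not_blocks_empty E i (hpath i))
        · exact h
      obtain ⟨j, hjS₀⟩ := hne
      have hedge : E (Sum.inl i) (Sum.inl j) := (hS₀F.1 hjS₀).1
      refine ⟨Sum.inl j, Or.inr ⟨j, rfl, ?_, ⟨S₀, hmin, hjS₀⟩⟩⟩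
      rintro ⟨S', hS'min, hjS', hnB⟩
      -- a path from j avoiding S' extends (via the edge i → j) to one from i
      have hpathj : Relation.ReflTransGen
          (fun a b => E a b ∧ ∀ s : Fin n, b = Sum.inl s → s ∉ S')
          (Sum.inl j) (Sum.inr ()) := not_not.mp hnB
      exact hS'min.2.1 (Relation.ReflTransGen.head
        ⟨hedge, fun s hs => by cases hs; exact hjS'⟩ hpathj)
  -- conclude the cardinality bound
  choose t ht using key
  have hinj : Function.Injective (fun i : Fin n => (i, t i)) := by
    intro a b h
    exact congrArg Prod.fst h
  have hsub : (fun i : Fin n => (i, t i)) '' Set.univ ⊆ T := by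
    rintro e ⟨i, -, rfl⟩
    exact ht i
  calc n = (Set.univ : Set (Fin n)).ncard := by simp [Set.ncard_univ]
    _ = ((fun i : Fin n => (i, t i)) '' Set.univ).ncard :=
        (Set.ncard_image_of_injective _ hinj).symm
    _ ≤ T.ncard := Set.ncard_le_ncard hsub T.toFinite
end

section
/- In the path-blocking inference for gene regulatory networks: suppose there exists a minimal blocking set S ∈ β(G_i) with G_j ∉ S such that S does not block G_j to P. Then the edge G_i → G_j does not exist in the GRN. -/
/-- An `S`-avoiding path from `j` to the phenotype, prefixed by the edge `i → j`, avoids `S`. -/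
theorem Blocks.of_edge {n : ℕ} {E : (Fin n ⊕ Unit) → (Fin n ⊕ Unit) → Prop} {i j : Fin n}
    {S : Set (Fin n)} (hS : Blocks E i S) (hE : E (Sum.inl i) (Sum.inl j)) (hjS : j ∉ S) :
    Blocks E j S := fun hpath =>
  hS <| .head ⟨hE, fun _ hs => Sum.inl_injective hs ▸ hjS⟩ hpath

theorem edge_absent_from_path_blocking_general
    {n : ℕ} (E : (Fin n ⊕ Unit) → (Fin n ⊕ Unit) → Prop) (i j : Fin n)
    (S : Set (Fin n)) (hS : Blocks E i S)
    (hjS : j ∉ S) (hj : ¬ Blocks E j S) :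
    ¬ E (Sum.inl i) (Sum.inl j) :=
  fun hE => hj (hS.of_edge hE hjS)

/-- If a minimal blocking set S for gene i does not contain gene j and does not
block j to the phenotype, then the edge i → j is absent from the GRN. -/
theorem edge_absent_from_path_blocking
    {n : ℕ} (E : (Fin n ⊕ Unit) → (Fin n ⊕ Unit) → Prop) (i j : Fin n)
    (S : Set (Fin n)) (hiS : i ∉ S) (hS : Blocks E i S)
    (hmin : ∀ S' : Set (Fin n), S' ⊂ S → ¬ Blocks E i S')
    (hjS : j ∉ S) (hj : ¬ Blocks E j S) :
    ¬ E (Sum.inl i) (Sum.inl j) :=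
  edge_absent_from_path_blocking_general E i j S hS hjS hj
end
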